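/- arXiv:1804.01470 — 8 statements merged into one kernel-verified Lean document; each statement's English description precedes it below -/
import Mathlib

section
/- If functions f, g, h on ℤ² satisfy the three bilinear equations (a₁−a₂)f₁₂g + a₂g₂f₁ − a₁g₁f₂ = 0, (a₁−a₂)g₁₂h + a₂h₂g₁ − a₁h₁g₂ = 0, (a₁−a₂)h₁₂f + a₂f₂h₁ − a₁f₁h₂ = 0 (subscripts denote forward shifts in n₁, n₂), and f, g are nowhere zero, then the functions v = h/f, w = g/f, u = f₁₂f/(f₁f₂) satisfy (a₁−a₂)uw = a₁w₁ − a₂w₂, (a₁−a₂)uw₁₂v = a₁w₂v₁ − a₂w₁v₂, and (a₁−a₂)uv₁₂ = a₁v₂ − a₂v₁. -/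
/-!
Each of the three equations is one of the bilinear equations divided by `f₁ f₂`: after
substituting `u`, the products `u w`, `u w₁₂ v` and `u v₁₂` become `f₁₂ g / (f₁ f₂)`,
`g₁₂ h / (f₁ f₂)` and `f h₁₂ / (f₁ f₂)`.
-/

section Miura

variable {K : Type*} [Field K] (a₁ a₂ : K) {f : ℤ → ℤ → K} (hf : ∀ m n, f m n ≠ 0)
include hf

theorem miura_w_of_bilinear {g : ℤ → ℤ → K}
    (hbil : ∀ m n, (a₁ - a₂) * f (m+1) (n+1) * g m n
      + a₂ * g m (n+1) * f (m+1) n - a₁ * g (m+1) n * f m (n+1) = 0) (m n : ℤ) :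
    (a₁ - a₂) * (f (m+1) (n+1) * f m n / (f (m+1) n * f m (n+1))) * (g m n / f m n)
      = a₁ * (g (m+1) n / f (m+1) n) - a₂ * (g m (n+1) / f m (n+1)) := by
  have := hf m n; have := hf (m+1) n; have := hf m (n+1)
  field_simp
  linear_combination hbil m n

theorem miura_wv_of_bilinear {g h : ℤ → ℤ → K}
    (hbil : ∀ m n, (a₁ - a₂) * g (m+1) (n+1) * h m n
      + a₂ * h m (n+1) * g (m+1) n - a₁ * h (m+1) n * g m (n+1) = 0) (m n : ℤ) :
    (a₁ - a₂) * (f (m+1) (n+1) * f m n / (f (m+1) n * f m (n+1)))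
        * (g (m+1) (n+1) / f (m+1) (n+1)) * (h m n / f m n)
      = a₁ * (g m (n+1) / f m (n+1)) * (h (m+1) n / f (m+1) n)
        - a₂ * (g (m+1) n / f (m+1) n) * (h m (n+1) / f m (n+1)) := by
  have := hf m n; have := hf (m+1) n; have := hf m (n+1); have := hf (m+1) (n+1)
  field_simp
  linear_combination hbil m n

theorem miura_v_of_bilinear {h : ℤ → ℤ → K}
    (hbil : ∀ m n, (a₁ - a₂) * h (m+1) (n+1) * f m n
      + a₂ * f m (n+1) * h (m+1) n - a₁ * f (m+1) n * h m (n+1) = 0) (m n : ℤ) :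
    (a₁ - a₂) * (f (m+1) (n+1) * f m n / (f (m+1) n * f m (n+1))) * (h (m+1) (n+1) / f (m+1) (n+1))
      = a₁ * (h m (n+1) / f m (n+1)) - a₂ * (h (m+1) n / f (m+1) n) := by
  have := hf m n; have := hf (m+1) n; have := hf m (n+1); have := hf (m+1) (n+1)
  field_simp
  linear_combination hbil m n

end Miura

theorem stmt0_general (f g h v w u : ℤ → ℤ → ℂ) (a₁ a₂ : ℂ)
    (hf : ∀ m n, f m n ≠ 0)
    (hbil1 : ∀ m n, (a₁ - a₂) * f (m+1) (n+1) * g m n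
      + a₂ * g m (n+1) * f (m+1) n - a₁ * g (m+1) n * f m (n+1) = 0)
    (hbil2 : ∀ m n, (a₁ - a₂) * g (m+1) (n+1) * h m n
      + a₂ * h m (n+1) * g (m+1) n - a₁ * h (m+1) n * g m (n+1) = 0)
    (hbil3 : ∀ m n, (a₁ - a₂) * h (m+1) (n+1) * f m n
      + a₂ * f m (n+1) * h (m+1) n - a₁ * f (m+1) n * h m (n+1) = 0)
    (hv : ∀ m n, v m n = h m n / f m n)
    (hw : ∀ m n, w m n = g m n / f m n)
    (hu : ∀ m n, u m n = f (m+1) (n+1) * f m n / (f (m+1) n * f m (n+1))) :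
    (∀ m n, (a₁ - a₂) * u m n * w m n = a₁ * w (m+1) n - a₂ * w m (n+1)) ∧
    (∀ m n, (a₁ - a₂) * u m n * w (m+1) (n+1) * v m n
      = a₁ * w m (n+1) * v (m+1) n - a₂ * w (m+1) n * v m (n+1)) ∧
    (∀ m n, (a₁ - a₂) * u m n * v (m+1) (n+1)
      = a₁ * v m (n+1) - a₂ * v (m+1) n) := by
  simp only [hv, hw, hu]
  exact ⟨miura_w_of_bilinear a₁ a₂ hf hbil1, miura_wv_of_bilinear a₁ a₂ hf hbil2,
    miura_v_of_bilinear a₁ a₂ hf hbil3⟩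

/-- From the three bilinear equations for f, g, h to the Miura-type system for
    v = h/f, w = g/f, u = f₁₂f/(f₁f₂). -/
theorem stmt0 (f g h v w u : ℤ → ℤ → ℂ) (a₁ a₂ : ℂ)
    (hf : ∀ m n, f m n ≠ 0) (hg : ∀ m n, g m n ≠ 0)
    (hbil1 : ∀ m n, (a₁ - a₂) * f (m+1) (n+1) * g m n
      + a₂ * g m (n+1) * f (m+1) n - a₁ * g (m+1) n * f m (n+1) = 0)
    (hbil2 : ∀ m n, (a₁ - a₂) * g (m+1) (n+1) * h m n
      + a₂ * h m (n+1) * g (m+1) n - a₁ * h (m+1) n * g m (n+1) = 0)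
    (hbil3 : ∀ m n, (a₁ - a₂) * h (m+1) (n+1) * f m n
      + a₂ * f m (n+1) * h (m+1) n - a₁ * f (m+1) n * h m (n+1) = 0)
    (hv : ∀ m n, v m n = h m n / f m n)
    (hw : ∀ m n, w m n = g m n / f m n)
    (hu : ∀ m n, u m n = f (m+1) (n+1) * f m n / (f (m+1) n * f m (n+1))) :
    (∀ m n, (a₁ - a₂) * u m n * w m n = a₁ * w (m+1) n - a₂ * w m (n+1)) ∧
    (∀ m n, (a₁ - a₂) * u m n * w (m+1) (n+1) * v m n
      = a₁ * w m (n+1) * v (m+1) n - a₂ * w (m+1) n * v m (n+1)) ∧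
    (∀ m n, (a₁ - a₂) * u m n * v (m+1) (n+1)
      = a₁ * v m (n+1) - a₂ * v (m+1) n) :=
  stmt0_general f g h v w u a₁ a₂ hf hbil1 hbil2 hbil3 hv hw hu
end

section
/- Suppose v, w : ℤ² → ℂ are nowhere-vanishing and u : ℤ² → ℂ satisfies (a₁−a₂)uw = a₁w₁ − a₂w₂, (a₁−a₂)uw₁₂v = a₁w₂v₁ − a₂w₁v₂, and (a₁−a₂)uv₁₂ = a₁v₂ − a₂v₁, where u is nowhere zero and a₁ ≠ a₂. Then v and w satisfy the two-component discrete modified Boussinesq equation: (a₁w₁ − a₂w₂)·w₁₂v = (a₁w₂v₁ − a₂w₁v₂)·w and (a₁w₂v₁ − a₂w₁v₂)·v₁₂ = (a₁v₂ − a₂v₁)·w₁₂v. -/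
theorem stmt1_general (v w u : ℤ → ℤ → ℂ) (a₁ a₂ : ℂ)
    (h1 : ∀ m n, (a₁ - a₂) * u m n * w m n = a₁ * w (m+1) n - a₂ * w m (n+1))
    (h2 : ∀ m n, (a₁ - a₂) * u m n * w (m+1) (n+1) * v m n
      = a₁ * w m (n+1) * v (m+1) n - a₂ * w (m+1) n * v m (n+1))
    (h3 : ∀ m n, (a₁ - a₂) * u m n * v (m+1) (n+1)
      = a₁ * v m (n+1) - a₂ * v (m+1) n) :
    (∀ m n, (a₁ * w (m+1) n - a₂ * w m (n+1)) * (w (m+1) (n+1) * v m n)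
      = (a₁ * w m (n+1) * v (m+1) n - a₂ * w (m+1) n * v m (n+1)) * w m n) ∧
    (∀ m n, (a₁ * w m (n+1) * v (m+1) n - a₂ * w (m+1) n * v m (n+1)) * v (m+1) (n+1)
      = (a₁ * v m (n+1) - a₂ * v (m+1) n) * (w (m+1) (n+1) * v m n)) := by
  -- Each equation has (a₁ - a₂) u times one and the same product on both sides.
  constructor <;> intro m n
  · rw [← h1 m n, ← h2 m n]; ring
  · rw [← h3 m n, ← h2 m n]; ring

/-- Eliminating u from the Miura-type system yields the two-component discrete
    modified Boussinesq equation. -/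
theorem stmt1 (v w u : ℤ → ℤ → ℂ) (a₁ a₂ : ℂ) (ha : a₁ ≠ a₂)
    (hv : ∀ m n, v m n ≠ 0) (hw : ∀ m n, w m n ≠ 0) (hu : ∀ m n, u m n ≠ 0)
    (h1 : ∀ m n, (a₁ - a₂) * u m n * w m n = a₁ * w (m+1) n - a₂ * w m (n+1))
    (h2 : ∀ m n, (a₁ - a₂) * u m n * w (m+1) (n+1) * v m n
      = a₁ * w m (n+1) * v (m+1) n - a₂ * w (m+1) n * v m (n+1))
    (h3 : ∀ m n, (a₁ - a₂) * u m n * v (m+1) (n+1)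
      = a₁ * v m (n+1) - a₂ * v (m+1) n) :
    (∀ m n, (a₁ * w (m+1) n - a₂ * w m (n+1)) * (w (m+1) (n+1) * v m n)
      = (a₁ * w m (n+1) * v (m+1) n - a₂ * w (m+1) n * v m (n+1)) * w m n) ∧
    (∀ m n, (a₁ * w m (n+1) * v (m+1) n - a₂ * w (m+1) n * v m (n+1)) * v (m+1) (n+1)
      = (a₁ * v m (n+1) - a₂ * v (m+1) n) * (w (m+1) (n+1) * v m n)) :=
  stmt1_general v w u a₁ a₂ h1 h2 h3
end

section
/- Let v, w : ℤ² → ℂ be nowhere-vanishing functions, a₁, a₂, λ constants, and define the 3×3 matrices L = [[a₁w₁/w, λ, 0], [0, a₁(v₁/v)(w/w₁), λ], [λ, 0, a₁v/v₁]] and M = [[a₂w₂/w, λ, 0], [0, a₂(v₂/v)(w/w₂), λ], [λ, 0, a₂v/v₂]]. Then the compatibility condition L₂·M = M₁·L holds (for λ ≠ 0) if and only if v, w satisfy the discrete modified Boussinesq equation (a₁w₁ − a₂w₂)w₁₂v = (a₁w₂v₁ − a₂w₁v₂)w, (a₁w₂v₁ − a₂w₁v₂)v₁₂ = (a₁v₂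 − a₂v₁)w₁₂v. -/
open Matrix

/-
Both sides of the compatibility condition are products of matrices of the shape
`!![a, l, 0; 0, b, l; l, 0, c]`, so for `l ≠ 0` it splits into three diagonal and three
off-diagonal scalar conditions. The diagonal ones telescope to identities, the (0,1) and (1,2)
ones are the two Boussinesq equations after clearing denominators, and the (2,0) one follows
from those two.
-/

theorem lax_mul_lax_eq_iff {R : Type*} [CommRing R] [NoZeroDivisors R]
    {l a b c a' b' c' d e f d' e' f' : R} (hl : l ≠ 0) :
    !![a, l, 0; 0, b, l; l, 0, c] * !![a', l, 0; 0, b', l; l, 0, c'] =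
        !![d, l, 0; 0, e, l; l, 0, f] * !![d', l, 0; 0, e', l; l, 0, f'] ↔
      a * a' = d * d' ∧ b * b' = e * e' ∧ c * c' = f * f' ∧
        a + b' = d + e' ∧ b + c' = e + f' ∧ c + a' = f + d' := by
  have factor (x y : R) : x * l + l * y = l * (x + y) := by ring
  have factor' (x y : R) : l * x + y * l = l * (y + x) := by ring
  simp only [mul_fin_three, ← Matrix.ext_iff, Fin.forall_fin_succ]
  simp [factor, factor', mul_right_inj' hl, and_assoc, and_comm, and_left_comm]

theorem eq_iff_eq_of_sub_eq_div {K : Type*} [Field K] {a b c d e : K} (he : e ≠ 0)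
    (h : a - b = (c - d) / e) : a = b ↔ c = d := by
  rw [← sub_eq_zero, h, div_eq_zero_iff, sub_eq_zero, or_iff_left he]

section DiscreteBoussinesq

variable {K : Type*} [Field K] {a₁ a₂ v v₁ v₂ v₁₂ w w₁ w₂ w₁₂ : K}

theorem lax_entry01_iff (hv : v ≠ 0) (hw₁ : w₁ ≠ 0) (hw₂ : w₂ ≠ 0) :
    a₁ * w₁₂ / w₂ + a₂ * (v₂ / v) * (w / w₂) = a₂ * w₁₂ / w₁ + a₁ * (v₁ / v) * (w / w₁) ↔
      (a₁ * w₁ - a₂ * w₂) * (w₁₂ * v) = (a₁ * w₂ * v₁ - a₂ * w₁ * v₂) * w :=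
  eq_iff_eq_of_sub_eq_div (e := v * w₁ * w₂) (by simp [*]) (by field_simp; ring)

theorem lax_entry12_iff (hv₁ : v₁ ≠ 0) (hv₂ : v₂ ≠ 0) (hw₁₂ : w₁₂ ≠ 0) :
    a₁ * (v₁₂ / v₂) * (w₂ / w₁₂) + a₂ * (v / v₂) =
        a₂ * (v₁₂ / v₁) * (w₁ / w₁₂) + a₁ * (v / v₁) ↔
      (a₁ * w₂ * v₁ - a₂ * w₁ * v₂) * v₁₂ = (a₁ * v₂ - a₂ * v₁) * (w₁₂ * v) :=
  eq_iff_eq_of_sub_eq_div (e := v₁ * v₂ * w₁₂) (by simp [*]) (by field_simp; ring)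

theorem lax_entry20_iff (hw : w ≠ 0) (hv₁₂ : v₁₂ ≠ 0) :
    a₁ * (v₂ / v₁₂) + a₂ * w₂ / w = a₂ * (v₁ / v₁₂) + a₁ * w₁ / w ↔
      (a₁ * w₁ - a₂ * w₂) * v₁₂ = (a₁ * v₂ - a₂ * v₁) * w :=
  eq_iff_eq_of_sub_eq_div (e := - (w * v₁₂)) (by simp [*]) (by field_simp; ring)

theorem boussinesq_third (hv : v ≠ 0) (hw₁₂ : w₁₂ ≠ 0)
    (h₁ : (a₁ * w₁ - a₂ * w₂) * (w₁₂ * v) = (a₁ * w₂ * v₁ - a₂ * w₁ * v₂) * w)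
    (h₂ : (a₁ * w₂ * v₁ - a₂ * w₁ * v₂) * v₁₂ = (a₁ * v₂ - a₂ * v₁) * (w₁₂ * v)) :
    (a₁ * w₁ - a₂ * w₂) * v₁₂ = (a₁ * v₂ - a₂ * v₁) * w :=
  mul_left_cancel₀ (mul_ne_zero hw₁₂ hv) (by linear_combination v₁₂ * h₁ + w * h₂)

theorem lax_compatibility_iff {l : K} (hl : l ≠ 0) (hv : v ≠ 0) (hv₁ : v₁ ≠ 0) (hv₂ : v₂ ≠ 0)
    (hv₁₂ : v₁₂ ≠ 0) (hw : w ≠ 0) (hw₁ : w₁ ≠ 0) (hw₂ : w₂ ≠ 0) (hw₁₂ : w₁₂ ≠ 0) :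
    !![a₁ * w₁₂ / w₂, l, 0; 0, a₁ * (v₁₂ / v₂) * (w₂ / w₁₂), l; l, 0, a₁ * (v₂ / v₁₂)] *
          !![a₂ * w₂ / w, l, 0; 0, a₂ * (v₂ / v) * (w / w₂), l; l, 0, a₂ * (v / v₂)] =
        !![a₂ * w₁₂ / w₁, l, 0; 0, a₂ * (v₁₂ / v₁) * (w₁ / w₁₂), l; l, 0, a₂ * (v₁ / v₁₂)] *
          !![a₁ * w₁ / w, l, 0; 0, a₁ * (v₁ / v) * (w / w₁), l; l, 0, a₁ * (v / v₁)] ↔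
      (a₁ * w₁ - a₂ * w₂) * (w₁₂ * v) = (a₁ * w₂ * v₁ - a₂ * w₁ * v₂) * w ∧
        (a₁ * w₂ * v₁ - a₂ * w₁ * v₂) * v₁₂ = (a₁ * v₂ - a₂ * v₁) * (w₁₂ * v) := by
  have diag₀ : a₁ * w₁₂ / w₂ * (a₂ * w₂ / w) = a₂ * w₁₂ / w₁ * (a₁ * w₁ / w) := by
    field_simp
  have diag₁ : a₁ * (v₁₂ / v₂) * (w₂ / w₁₂) * (a₂ * (v₂ / v) * (w / w₂)) =
      a₂ * (v₁₂ / v₁) * (w₁ / w₁₂) * (a₁ * (v₁ / v) * (w / w₁)) := by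
    field_simp
  have diag₂ : a₁ * (v₂ / v₁₂) * (a₂ * (v / v₂)) = a₂ * (v₁ / v₁₂) * (a₁ * (v / v₁)) := by
    field_simp
  rw [lax_mul_lax_eq_iff hl, lax_entry01_iff hv hw₁ hw₂, lax_entry12_iff hv₁ hv₂ hw₁₂,
    lax_entry20_iff hw hv₁₂]
  simp only [diag₀, diag₁, diag₂, true_and]
  exact ⟨fun h ↦ ⟨h.1, h.2.1⟩, fun h ↦ ⟨h.1, h.2, boussinesq_third hv hw₁₂ h.1 h.2⟩⟩

end DiscreteBoussinesq

/-- The compatibility condition L₂·M = M₁·L of the 3×3 Lax pair holds iff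
    (v, w) satisfy the discrete modified Boussinesq equation. -/
theorem stmt2 (v w : ℤ → ℤ → ℂ) (a₁ a₂ l : ℂ) (hl : l ≠ 0)
    (hv : ∀ m n, v m n ≠ 0) (hw : ∀ m n, w m n ≠ 0)
    (L M : ℤ → ℤ → Matrix (Fin 3) (Fin 3) ℂ)
    (hL : ∀ m n, L m n =
      !![a₁ * w (m+1) n / w m n, l, 0;
         0, a₁ * (v (m+1) n / v m n) * (w m n / w (m+1) n), l;
         l, 0, a₁ * (v m n / v (m+1) n)])
    (hM : ∀ m n, M m n =
      !![a₂ * w m (n+1) / w m n, l, 0;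
         0, a₂ * (v m (n+1) / v m n) * (w m n / w m (n+1)), l;
         l, 0, a₂ * (v m n / v m (n+1))]) :
    (∀ m n, L m (n+1) * M m n = M (m+1) n * L m n) ↔
    ((∀ m n, (a₁ * w (m+1) n - a₂ * w m (n+1)) * (w (m+1) (n+1) * v m n)
        = (a₁ * w m (n+1) * v (m+1) n - a₂ * w (m+1) n * v m (n+1)) * w m n) ∧
     (∀ m n, (a₁ * w m (n+1) * v (m+1) n - a₂ * w (m+1) n * v m (n+1)) * v (m+1) (n+1)
        = (a₁ * v m (n+1) - a₂ * v (m+1) n) * (w (m+1) (n+1) * v m n))) := by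
  simp only [hL, hM, ← forall_and]
  refine forall₂_congr fun m n ↦ ?_
  exact lax_compatibility_iff hl (hv m n) (hv (m+1) n) (hv m (n+1)) (hv (m+1) (n+1))
    (hw m n) (hw (m+1) n) (hw m (n+1)) (hw (m+1) (n+1))
end

section
/- The entrywise difference L₂·M − M₁·L of the Lax matrices of the discrete modified Boussinesq equation equals λ times the matrix with only nonzero entries in positions (1,2), (2,3), (3,1), given respectively by [(a₁w₁ − a₂w₂)w₁₂v − (a₁w₂v₁ − a₂w₁v₂)w]/(w₁w₂v), [(a₁w₂v₁ − a₂w₁v₂)v₁₂ − (a₁v₂ − a₂v₁)w₁₂v]/(w₁₂v₁v₂), and [(a₁v₂ − a₂v₁)w − (a₁w₁ − a₂w₂)v₁₂]/(wv₁₂). -/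
/-!
Both Lax matrices have the shape `a • diagonal d + λ • S` (`λ` is `l`), with `S` the cyclic
shift, and their diagonals are lattice ratios of the single potential `p = (w, v / w, 1 / v)`: `L` carries
`p₁ / p` and `M` carries `p₂ / p`. In `L₂ M - M₁ L` the `λ²` terms cancel as `S² - S²`, and the
diagonal-times-diagonal terms cancel because `(p₁₂ / p₂) (p₂ / p) = p₁₂ / p = (p₁₂ / p₁) (p₁ / p)`.
Only the `λ`-linear terms survive, and they sit where `S` does.
-/

open Matrix

section LaxMatrix

variable {n R K : Type*} [Fintype n] [DecidableEq n]

def laxMatrix [CommRing R] (σ : Equiv.Perm n) (a l : R) (d : n → R) : Matrix n n R :=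
  a • diagonal d + l • σ.permMatrix R

theorem diagonal_mul_permMatrix_add_permMatrix_mul_diagonal_apply [CommRing R]
    (σ : Equiv.Perm n) (x y : n → R) (i j : n) :
    (diagonal x * σ.permMatrix R + σ.permMatrix R * diagonal y) i j =
      if σ i = j then x i + y j else 0 := by
  by_cases hij : σ i = j <;>
    simp [hij, diagonal_mul, mul_diagonal, Equiv.Perm.permMatrix, PEquiv.toMatrix_apply]

theorem laxMatrix_mul_sub_mul [CommRing R] (σ : Equiv.Perm n) (a b l : R) {d d' e e' : n → R}
    (h : ∀ i, d i * d' i = e i * e' i) :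
    laxMatrix σ a l d * laxMatrix σ b l d' - laxMatrix σ b l e * laxMatrix σ a l e' =
      l • (diagonal (a • d - b • e) * σ.permMatrix R
        + σ.permMatrix R * diagonal (b • d' - a • e')) := by
  have hdiag : diagonal d * diagonal d' = diagonal e * diagonal e' := by
    simp only [diagonal_mul_diagonal, h]
  have hsub (x y : R) (f g : n → R) :
      diagonal (x • f - y • g) = x • diagonal f - y • diagonal g := by
    rw [← diagonal_smul, ← diagonal_smul, diagonal_sub]
    rfl
  simp only [laxMatrix, hsub, add_mul, mul_add, smul_mul_smul_comm, sub_mul, mul_sub, smul_sub,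
    smul_add, Matrix.smul_mul, Matrix.mul_smul, hdiag]
  module

theorem laxMatrix_div_mul_sub_mul [Field K] (σ : Equiv.Perm n) (a b l : K) {p p₁ p₂ p₁₂ : n → K}
    (h₁ : ∀ i, p₁ i ≠ 0) (h₂ : ∀ i, p₂ i ≠ 0) :
    laxMatrix σ a l (p₁₂ / p₂) * laxMatrix σ b l (p₂ / p)
        - laxMatrix σ b l (p₁₂ / p₁) * laxMatrix σ a l (p₁ / p) =
      l • (diagonal (a • (p₁₂ / p₂) - b • (p₁₂ / p₁)) * σ.permMatrix K
        + σ.permMatrix K * diagonal (b • (p₂ / p) - a • (p₁ / p))) :=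
  laxMatrix_mul_sub_mul σ a b l fun i => by
    simp only [Pi.div_apply, div_mul_div_cancel₀ (h₁ i), div_mul_div_cancel₀ (h₂ i)]

def boussinesqPotential [Field K] (v w : K) : Fin 3 → K :=
  ![w, v / w, v⁻¹]

theorem boussinesqPotential_ne_zero [Field K] {v w : K} (hv : v ≠ 0) (hw : w ≠ 0) (i : Fin 3) :
    boussinesqPotential v w i ≠ 0 := by
  fin_cases i <;> simp [boussinesqPotential, hv, hw]

theorem boussinesq_matrix_eq_laxMatrix [Field K] (a l v w v' w' : K) :
    !![a * w' / w, l, 0;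
       0, a * v' * w / (v * w'), l;
       l, 0, a * v / v'] =
      laxMatrix (finRotate 3) a l (boussinesqPotential v' w' / boussinesqPotential v w) := by
  ext i j
  fin_cases i <;> fin_cases j <;>
    simp [boussinesqPotential, laxMatrix, Equiv.Perm.permMatrix, PEquiv.toMatrix_apply] <;>
    field_simp

end LaxMatrix

/-- The explicit form of L₂·M − M₁·L for the Lax matrices of the discrete
    modified Boussinesq equation. -/
theorem stmt3 (v w : ℤ → ℤ → ℂ) (a₁ a₂ l : ℂ)
    (hv : ∀ m n, v m n ≠ 0) (hw : ∀ m n, w m n ≠ 0)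
    (L M : ℤ → ℤ → Matrix (Fin 3) (Fin 3) ℂ)
    (hL : ∀ m n, L m n =
      !![a₁ * w (m+1) n / w m n, l, 0;
         0, a₁ * v (m+1) n * w m n / (v m n * w (m+1) n), l;
         l, 0, a₁ * v m n / v (m+1) n])
    (hM : ∀ m n, M m n =
      !![a₂ * w m (n+1) / w m n, l, 0;
         0, a₂ * v m (n+1) * w m n / (v m n * w m (n+1)), l;
         l, 0, a₂ * v m n / v m (n+1)]) :
    ∀ m n, L m (n+1) * M m n - M (m+1) n * L m n =
      l • !![0,
             ((a₁ * w (m+1) n - a₂ * w m (n+1)) * w (m+1) (n+1) * v m n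
               - (a₁ * w m (n+1) * v (m+1) n - a₂ * w (m+1) n * v m (n+1)) * w m n)
               / (w (m+1) n * w m (n+1) * v m n), 0;
             0, 0,
             ((a₁ * w m (n+1) * v (m+1) n - a₂ * w (m+1) n * v m (n+1)) * v (m+1) (n+1)
               - (a₁ * v m (n+1) - a₂ * v (m+1) n) * w (m+1) (n+1) * v m n)
               / (w (m+1) (n+1) * v (m+1) n * v m (n+1));
             ((a₁ * v m (n+1) - a₂ * v (m+1) n) * w m n
               - (a₁ * w (m+1) n - a₂ * w m (n+1)) * v (m+1) (n+1))
               / (w m n * v (m+1) (n+1)), 0, 0] := by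
  set p := fun m n => boussinesqPotential (v m n) (w m n) with hp
  have hL' (m n : ℤ) : L m n = laxMatrix (finRotate 3) a₁ l (p (m+1) n / p m n) :=
    (hL m n).trans (boussinesq_matrix_eq_laxMatrix a₁ l _ _ _ _)
  have hM' (m n : ℤ) : M m n = laxMatrix (finRotate 3) a₂ l (p m (n+1) / p m n) :=
    (hM m n).trans (boussinesq_matrix_eq_laxMatrix a₂ l _ _ _ _)
  intro m n
  rw [hL', hM', hL', hM', laxMatrix_div_mul_sub_mul _ _ _ _
    (boussinesqPotential_ne_zero (hv _ _) (hw _ _)) (boussinesqPotential_ne_zero (hv _ _) (hw _ _))]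
  congr 1
  ext i j
  rw [diagonal_mul_permMatrix_add_permMatrix_mul_diagonal_apply]
  fin_cases i <;> fin_cases j <;> simp [hp, boussinesqPotential] <;> field_simp [hv, hw] <;> ring
end

section
/- Let ω = (−1+√3·i)/2 be a primitive cube root of unity and ω* its complex conjugate. For constants a₁, a₂, λ ∈ ℂ, define φ⁽¹⁾(n₁,n₂,n₃) = λ^{n₃}(a₁+λ)^{n₁}(a₂+λ)^{n₂}, φ⁽²⁾ = (ωλ)^{n₃}(a₁+ωλ)^{n₁}(a₂+ωλ)^{n₂}, φ⁽³⁾ = (ω*λ)^{n₃}(a₁+ω*λ)^{n₁}(a₂+ω*λ)^{n₂}, and set φ = φ⁽¹⁾+φ⁽²⁾+φ⁽³⁾, φ̄ = φ⁽¹⁾+ωφ⁽²⁾+ω*φ⁽³⁾, φ̄̄ = φ⁽¹⁾+ω²φ⁽²⁾+ω*²φ⁽³⁾. Then (φ, φ̄, φ̄̄) satisfies the seed linear system: φ₁ = a₁φ + λφ̄, φ̄₁ = a₁φ̄ + λφ̄̄, φ̄̄₁ = a₁φ̄̄ + λφ, and the analogous equations with a₂ and the shift in n₂. -/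
/-!
Each φ⁽ᵏ⁾ is a discrete exponential whose shift in n₁ multiplies it by a₁ + ζλ with ζ ∈ {1, ω, ω*},
and (1, ζ, ζ²) is an eigenvector, with eigenvalue a₁ + ζλ, of the cyclic map
(x, y, z) ↦ (a₁x + λy, a₁y + λz, a₁z + λx) because ζ³ = 1. The system is linear, so the
superposition (φ, φ̄, φ̄̄) of the three eigen-solutions solves it; likewise for n₂.
-/

open Finset

theorem pow_three_eq_one_of_sq_eq_neg_three {K : Type*} [Field K] [NeZero (2 : K)] {s : K}
    (hs : s ^ 2 = -3) : ((-1 + s) / 2) ^ 3 = 1 := by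
  field_simp
  linear_combination (s - 3) * hs

theorem sqrt_three_mul_I_sq : ((Real.sqrt 3 : ℂ) * Complex.I) ^ 2 = -3 := by
  rw [mul_pow, Complex.I_sq, ← Complex.ofReal_pow, Real.sq_sqrt (by norm_num)]
  push_cast
  ring

theorem zpow_mul_zpow_mul_zpow_shift {K : Type*} [Field K] {c b₁ b₂ : K} (hb₁ : b₁ ≠ 0)
    (hb₂ : b₂ ≠ 0) (n₁ n₂ n₃ : ℤ) :
    c ^ n₃ * b₁ ^ (n₁ + 1) * b₂ ^ n₂ = b₁ * (c ^ n₃ * b₁ ^ n₁ * b₂ ^ n₂) ∧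
    c ^ n₃ * b₁ ^ n₁ * b₂ ^ (n₂ + 1) = b₂ * (c ^ n₃ * b₁ ^ n₁ * b₂ ^ n₂) := by
  rw [zpow_add_one₀ hb₁, zpow_add_one₀ hb₂]
  constructor <;> ring

theorem sum_cyclic_system_of_pow_three_eq_one {ι R : Type*} [Fintype ι] [CommRing R]
    {a l : R} {ζ x x' : ι → R} (hζ : ∀ i, ζ i ^ 3 = 1) (hx' : ∀ i, x' i = (a + ζ i * l) * x i) :
    ∑ i, x' i = a * ∑ i, x i + l * ∑ i, ζ i * x i ∧
    ∑ i, ζ i * x' i = a * ∑ i, ζ i * x i + l * ∑ i, ζ i ^ 2 * x i ∧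
    ∑ i, ζ i ^ 2 * x' i = a * ∑ i, ζ i ^ 2 * x i + l * ∑ i, x i := by
  simp only [hx', mul_sum, ← sum_add_distrib]
  refine ⟨sum_congr rfl fun i _ => by ring, sum_congr rfl fun i _ => by ring,
    sum_congr rfl fun i _ => ?_⟩
  linear_combination l * x i * hζ i

theorem stmt7_general (a₁ a₂ l : ℂ)
    (ω ωs : ℂ)
    (hω : ω = (-1 + Real.sqrt 3 * Complex.I) / 2)
    (hωs : ωs = (-1 - Real.sqrt 3 * Complex.I) / 2)
    (h1 : a₁ + l ≠ 0) (h2 : a₁ + ω * l ≠ 0) (h3 : a₁ + ωs * l ≠ 0)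
    (h4 : a₂ + l ≠ 0) (h5 : a₂ + ω * l ≠ 0) (h6 : a₂ + ωs * l ≠ 0)
    (φ1 φ2 φ3 φ φb φbb : ℤ → ℤ → ℤ → ℂ)
    (hφ1 : ∀ n₁ n₂ n₃, φ1 n₁ n₂ n₃ = l ^ n₃ * (a₁ + l) ^ n₁ * (a₂ + l) ^ n₂)
    (hφ2 : ∀ n₁ n₂ n₃, φ2 n₁ n₂ n₃ = (ω * l) ^ n₃ * (a₁ + ω * l) ^ n₁ * (a₂ + ω * l) ^ n₂)
    (hφ3 : ∀ n₁ n₂ n₃, φ3 n₁ n₂ n₃ = (ωs * l) ^ n₃ * (a₁ + ωs * l) ^ n₁ * (a₂ + ωs * l) ^ n₂)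
    (hφ : ∀ n₁ n₂ n₃, φ n₁ n₂ n₃ = φ1 n₁ n₂ n₃ + φ2 n₁ n₂ n₃ + φ3 n₁ n₂ n₃)
    (hφb : ∀ n₁ n₂ n₃, φb n₁ n₂ n₃ = φ1 n₁ n₂ n₃ + ω * φ2 n₁ n₂ n₃ + ωs * φ3 n₁ n₂ n₃)
    (hφbb : ∀ n₁ n₂ n₃, φbb n₁ n₂ n₃
      = φ1 n₁ n₂ n₃ + ω^2 * φ2 n₁ n₂ n₃ + ωs^2 * φ3 n₁ n₂ n₃) :
    (∀ n₁ n₂ n₃, φ (n₁+1) n₂ n₃ = a₁ * φ n₁ n₂ n₃ + l * φb n₁ n₂ n₃) ∧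
    (∀ n₁ n₂ n₃, φb (n₁+1) n₂ n₃ = a₁ * φb n₁ n₂ n₃ + l * φbb n₁ n₂ n₃) ∧
    (∀ n₁ n₂ n₃, φbb (n₁+1) n₂ n₃ = a₁ * φbb n₁ n₂ n₃ + l * φ n₁ n₂ n₃) ∧
    (∀ n₁ n₂ n₃, φ n₁ (n₂+1) n₃ = a₂ * φ n₁ n₂ n₃ + l * φb n₁ n₂ n₃) ∧
    (∀ n₁ n₂ n₃, φb n₁ (n₂+1) n₃ = a₂ * φb n₁ n₂ n₃ + l * φbb n₁ n₂ n₃) ∧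
    (∀ n₁ n₂ n₃, φbb n₁ (n₂+1) n₃ = a₂ * φbb n₁ n₂ n₃ + l * φ n₁ n₂ n₃) := by
  set ζ : Fin 3 → ℂ := ![1, ω, ωs]
  set ψ : Fin 3 → ℤ → ℤ → ℤ → ℂ := ![φ1, φ2, φ3]
  have hζ : ∀ i, ζ i ^ 3 = 1 := by
    have hωs' : ωs = (-1 + -(Real.sqrt 3 * Complex.I)) / 2 := by rw [hωs]; ring
    simp [ζ, Fin.forall_fin_succ, hω, hωs', pow_three_eq_one_of_sq_eq_neg_three,
      sqrt_three_mul_I_sq]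
  have hψ : ∀ i n₁ n₂ n₃,
      ψ i n₁ n₂ n₃ = (ζ i * l) ^ n₃ * (a₁ + ζ i * l) ^ n₁ * (a₂ + ζ i * l) ^ n₂ := by
    simp [ψ, ζ, Fin.forall_fin_succ, hφ1, hφ2, hφ3]
  have hne : ∀ i, a₁ + ζ i * l ≠ 0 ∧ a₂ + ζ i * l ≠ 0 := by
    simp [ζ, Fin.forall_fin_succ, h1, h2, h3, h4, h5, h6]
  have shift : ∀ n₁ n₂ n₃ i, ψ i (n₁ + 1) n₂ n₃ = (a₁ + ζ i * l) * ψ i n₁ n₂ n₃ ∧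
      ψ i n₁ (n₂ + 1) n₃ = (a₂ + ζ i * l) * ψ i n₁ n₂ n₃ := by
    intro n₁ n₂ n₃ i
    simp only [hψ]
    exact zpow_mul_zpow_mul_zpow_shift (hne i).1 (hne i).2 n₁ n₂ n₃
  have hsum : φ = (fun n₁ n₂ n₃ => ∑ i, ψ i n₁ n₂ n₃) ∧
      φb = (fun n₁ n₂ n₃ => ∑ i, ζ i * ψ i n₁ n₂ n₃) ∧
      φbb = (fun n₁ n₂ n₃ => ∑ i, ζ i ^ 2 * ψ i n₁ n₂ n₃) := by
    refine ⟨?_, ?_, ?_⟩ <;> ext <;> simp [Fin.sum_univ_three, ψ, ζ, hφ, hφb, hφbb]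
  obtain ⟨rfl, rfl, rfl⟩ := hsum
  have step₁ n₁ n₂ n₃ := sum_cyclic_system_of_pow_three_eq_one hζ fun i => (shift n₁ n₂ n₃ i).1
  have step₂ n₁ n₂ n₃ := sum_cyclic_system_of_pow_three_eq_one hζ fun i => (shift n₁ n₂ n₃ i).2
  exact ⟨fun n₁ n₂ n₃ => (step₁ n₁ n₂ n₃).1, fun n₁ n₂ n₃ => (step₁ n₁ n₂ n₃).2.1,
    fun n₁ n₂ n₃ => (step₁ n₁ n₂ n₃).2.2, fun n₁ n₂ n₃ => (step₂ n₁ n₂ n₃).1,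
    fun n₁ n₂ n₃ => (step₂ n₁ n₂ n₃).2.1, fun n₁ n₂ n₃ => (step₂ n₁ n₂ n₃).2.2⟩

/-- The discrete exponential eigenfunctions of the seed linear system for the
    constant seed solution (v, w) = (1, 1). -/
theorem stmt7 (a₁ a₂ l : ℂ)
    (ω ωs : ℂ)
    (hω : ω = (-1 + Real.sqrt 3 * Complex.I) / 2)
    (hωs : ωs = (-1 - Real.sqrt 3 * Complex.I) / 2)
    (hl : l ≠ 0)
    (h1 : a₁ + l ≠ 0) (h2 : a₁ + ω * l ≠ 0) (h3 : a₁ + ωs * l ≠ 0)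
    (h4 : a₂ + l ≠ 0) (h5 : a₂ + ω * l ≠ 0) (h6 : a₂ + ωs * l ≠ 0)
    (φ1 φ2 φ3 φ φb φbb : ℤ → ℤ → ℤ → ℂ)
    (hφ1 : ∀ n₁ n₂ n₃, φ1 n₁ n₂ n₃ = l ^ n₃ * (a₁ + l) ^ n₁ * (a₂ + l) ^ n₂)
    (hφ2 : ∀ n₁ n₂ n₃, φ2 n₁ n₂ n₃ = (ω * l) ^ n₃ * (a₁ + ω * l) ^ n₁ * (a₂ + ω * l) ^ n₂)
    (hφ3 : ∀ n₁ n₂ n₃, φ3 n₁ n₂ n₃ = (ωs * l) ^ n₃ * (a₁ + ωs * l) ^ n₁ * (a₂ + ωs * l) ^ n₂)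
    (hφ : ∀ n₁ n₂ n₃, φ n₁ n₂ n₃ = φ1 n₁ n₂ n₃ + φ2 n₁ n₂ n₃ + φ3 n₁ n₂ n₃)
    (hφb : ∀ n₁ n₂ n₃, φb n₁ n₂ n₃ = φ1 n₁ n₂ n₃ + ω * φ2 n₁ n₂ n₃ + ωs * φ3 n₁ n₂ n₃)
    (hφbb : ∀ n₁ n₂ n₃, φbb n₁ n₂ n₃
      = φ1 n₁ n₂ n₃ + ω^2 * φ2 n₁ n₂ n₃ + ωs^2 * φ3 n₁ n₂ n₃) :
    (∀ n₁ n₂ n₃, φ (n₁+1) n₂ n₃ = a₁ * φ n₁ n₂ n₃ + l * φb n₁ n₂ n₃) ∧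
    (∀ n₁ n₂ n₃, φb (n₁+1) n₂ n₃ = a₁ * φb n₁ n₂ n₃ + l * φbb n₁ n₂ n₃) ∧
    (∀ n₁ n₂ n₃, φbb (n₁+1) n₂ n₃ = a₁ * φbb n₁ n₂ n₃ + l * φ n₁ n₂ n₃) ∧
    (∀ n₁ n₂ n₃, φ n₁ (n₂+1) n₃ = a₂ * φ n₁ n₂ n₃ + l * φb n₁ n₂ n₃) ∧
    (∀ n₁ n₂ n₃, φb n₁ (n₂+1) n₃ = a₂ * φb n₁ n₂ n₃ + l * φbb n₁ n₂ n₃) ∧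
    (∀ n₁ n₂ n₃, φbb n₁ (n₂+1) n₃ = a₂ * φbb n₁ n₂ n₃ + l * φ n₁ n₂ n₃) :=
  stmt7_general a₁ a₂ l ω ωs hω hωs h1 h2 h3 h4 h5 h6 φ1 φ2 φ3 φ φb φbb hφ1 hφ2 hφ3 hφ hφb hφbb
end

section
/- With φ, φ̄, φ̄̄ defined from φ⁽¹⁾, φ⁽²⁾, φ⁽³⁾ as φ = φ⁽¹⁾+φ⁽²⁾+φ⁽³⁾, φ̄ = φ⁽¹⁾+ωφ⁽²⁾+ω*φ⁽³⁾, φ̄̄ = φ⁽¹⁾+ω²φ⁽²⁾+ω*²φ⁽³⁾ where φ⁽¹⁾ = λ^{n₃}∏ⱼ(aⱼ+λ)^{nⱼ}, φ⁽²⁾ = (ωλ)^{n₃}∏ⱼ(aⱼ+ωλ)^{nⱼ}, φ⁽³⁾ = (ω*λ)^{n₃}∏ⱼ(aⱼ+ω*λ)^{nⱼ}, the 3-periodic conditions hold: T₃(φ) = λφ̄, T₃²(φ) = λ²φ̄̄, and T₃³(φ) = λ³φ. -/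
/-!
Each summand `φ⁽ʲ⁾` is a plane wave in `n₃` with multiplier `ωʲ⁻¹λ`, so a shift by `k` multiplies
`φ⁽ʲ⁾` by `λᵏ ω^((j-1)k)`. For `k = 1, 2` this produces the twisted sums `φ̄, φ̄̄`, and for `k = 3`
all twists vanish because `ω³ = 1`.
-/

theorem zpow_add_natCast_mul_mul {G : Type*} [CommGroupWithZero G] {μ : G} (hμ : μ ≠ 0)
    (b₁ b₂ : G) (n₁ n₂ n₃ : ℤ) (k : ℕ) :
    μ ^ (n₃ + k) * b₁ ^ n₁ * b₂ ^ n₂ = μ ^ k * (μ ^ n₃ * b₁ ^ n₁ * b₂ ^ n₂) := by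
  rw [zpow_add₀ hμ, zpow_natCast]
  ac_rfl

theorem stmt8_general (a₁ a₂ l ω ωs : ℂ)
    (hω3 : ω^3 = 1) (hωs : ωs = ω^2)
    (hl : l ≠ 0)
    (φ1 φ2 φ3 φ φb φbb : ℤ → ℤ → ℤ → ℂ)
    (hφ1 : ∀ n₁ n₂ n₃, φ1 n₁ n₂ n₃ = l ^ n₃ * (a₁ + l) ^ n₁ * (a₂ + l) ^ n₂)
    (hφ2 : ∀ n₁ n₂ n₃, φ2 n₁ n₂ n₃ = (ω * l) ^ n₃ * (a₁ + ω * l) ^ n₁ * (a₂ + ω * l) ^ n₂)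
    (hφ3 : ∀ n₁ n₂ n₃, φ3 n₁ n₂ n₃ = (ωs * l) ^ n₃ * (a₁ + ωs * l) ^ n₁ * (a₂ + ωs * l) ^ n₂)
    (hφ : ∀ n₁ n₂ n₃, φ n₁ n₂ n₃ = φ1 n₁ n₂ n₃ + φ2 n₁ n₂ n₃ + φ3 n₁ n₂ n₃)
    (hφb : ∀ n₁ n₂ n₃, φb n₁ n₂ n₃ = φ1 n₁ n₂ n₃ + ω * φ2 n₁ n₂ n₃ + ωs * φ3 n₁ n₂ n₃)
    (hφbb : ∀ n₁ n₂ n₃, φbb n₁ n₂ n₃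
      = φ1 n₁ n₂ n₃ + ω^2 * φ2 n₁ n₂ n₃ + ωs^2 * φ3 n₁ n₂ n₃) :
    (∀ n₁ n₂ n₃, φ n₁ n₂ (n₃+1) = l * φb n₁ n₂ n₃) ∧
    (∀ n₁ n₂ n₃, φ n₁ n₂ (n₃+2) = l^2 * φbb n₁ n₂ n₃) ∧
    (∀ n₁ n₂ n₃, φ n₁ n₂ (n₃+3) = l^3 * φ n₁ n₂ n₃) := by
  subst hωs
  have hω : ω ≠ 0 := ne_zero_pow three_ne_zero (by rw [hω3]; exact one_ne_zero)
  have shift (k : ℕ) (n₁ n₂ n₃ : ℤ) : φ n₁ n₂ (n₃ + k)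
      = l ^ k * (φ1 n₁ n₂ n₃ + ω ^ k * φ2 n₁ n₂ n₃ + (ω ^ 2) ^ k * φ3 n₁ n₂ n₃) := by
    simp only [hφ, hφ1, hφ2, hφ3, zpow_add_natCast_mul_mul hl,
      zpow_add_natCast_mul_mul (mul_ne_zero hω hl),
      zpow_add_natCast_mul_mul (mul_ne_zero (pow_ne_zero 2 hω) hl)]
    ring
  refine ⟨fun n₁ n₂ n₃ => ?_, fun n₁ n₂ n₃ => ?_, fun n₁ n₂ n₃ => ?_⟩
  · simpa [hφb] using shift 1 n₁ n₂ n₃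
  · simpa [hφbb] using shift 2 n₁ n₂ n₃
  · rw [show n₃ + 3 = n₃ + (3 : ℕ) by norm_num, shift, hφ]
    linear_combination (l ^ 3 * φ2 n₁ n₂ n₃ + l ^ 3 * φ3 n₁ n₂ n₃ * (ω ^ 3 + 1)) * hω3

/-- The seed eigenfunctions satisfy the 3-periodic conditions
    T₃(φ) = λφ̄, T₃²(φ) = λ²φ̄̄, T₃³(φ) = λ³φ. -/
theorem stmt8 (a₁ a₂ l ω ωs : ℂ)
    (hω3 : ω^3 = 1) (hω1 : ω ≠ 1) (hωs : ωs = ω^2)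
    (hl : l ≠ 0)
    (h1 : a₁ + l ≠ 0) (h2 : a₁ + ω * l ≠ 0) (h3 : a₁ + ωs * l ≠ 0)
    (h4 : a₂ + l ≠ 0) (h5 : a₂ + ω * l ≠ 0) (h6 : a₂ + ωs * l ≠ 0)
    (φ1 φ2 φ3 φ φb φbb : ℤ → ℤ → ℤ → ℂ)
    (hφ1 : ∀ n₁ n₂ n₃, φ1 n₁ n₂ n₃ = l ^ n₃ * (a₁ + l) ^ n₁ * (a₂ + l) ^ n₂)
    (hφ2 : ∀ n₁ n₂ n₃, φ2 n₁ n₂ n₃ = (ω * l) ^ n₃ * (a₁ + ω * l) ^ n₁ * (a₂ + ω * l) ^ n₂)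
    (hφ3 : ∀ n₁ n₂ n₃, φ3 n₁ n₂ n₃ = (ωs * l) ^ n₃ * (a₁ + ωs * l) ^ n₁ * (a₂ + ωs * l) ^ n₂)
    (hφ : ∀ n₁ n₂ n₃, φ n₁ n₂ n₃ = φ1 n₁ n₂ n₃ + φ2 n₁ n₂ n₃ + φ3 n₁ n₂ n₃)
    (hφb : ∀ n₁ n₂ n₃, φb n₁ n₂ n₃ = φ1 n₁ n₂ n₃ + ω * φ2 n₁ n₂ n₃ + ωs * φ3 n₁ n₂ n₃)
    (hφbb : ∀ n₁ n₂ n₃, φbb n₁ n₂ n₃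
      = φ1 n₁ n₂ n₃ + ω^2 * φ2 n₁ n₂ n₃ + ωs^2 * φ3 n₁ n₂ n₃) :
    (∀ n₁ n₂ n₃, φ n₁ n₂ (n₃+1) = l * φb n₁ n₂ n₃) ∧
    (∀ n₁ n₂ n₃, φ n₁ n₂ (n₃+2) = l^2 * φbb n₁ n₂ n₃) ∧
    (∀ n₁ n₂ n₃, φ n₁ n₂ (n₃+3) = l^3 * φ n₁ n₂ n₃) :=
  stmt8_general a₁ a₂ l ω ωs hω3 hωs hl φ1 φ2 φ3 φ φb φbb hφ1 hφ2 hφ3 hφ hφb hφbb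
end

section
/- Let Ω be an N×N complex matrix, let a, c be column N-vectors, b, d row N-vectors, and α, β, γ, δ scalars. If the (N+1)×(N+1) bordered matrices are denoted [Ω a; b α] etc., then the Jacobi/Desnanot-type identity holds: det[Ω c; b γ]·det[Ω a; d β] − det[Ω a; b α]·det[Ω c; d δ] = −det(Ω)·det[Ω c a; d δ β; b γ α] (the (N+2)×(N+2) matrix with Ω bordered by columns c, a and rows (d, δ, β), (b, γ, α)). -/
open Matrix

/-- A bordered matrix: Ω with an extra column a, extra row b and corner α. -/
def border {N : ℕ} (Ω : Matrix (Fin N) (Fin N) ℂ) (a b : Fin N → ℂ) (α : ℂ) :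
    Matrix (Fin N ⊕ Unit) (Fin N ⊕ Unit) ℂ :=
  Matrix.fromBlocks Ω (fun i _ => a i) (fun _ j => b j) (fun _ _ => α)

/-- Ω bordered by two columns c, a and two rows (d, δ, β), (b, γ, α). -/
def border2 {N : ℕ} (Ω : Matrix (Fin N) (Fin N) ℂ) (c a d b : Fin N → ℂ)
    (δ β γ α : ℂ) : Matrix (Fin N ⊕ Fin 2) (Fin N ⊕ Fin 2) ℂ :=
  Matrix.fromBlocks Ω (fun i j => ![c i, a i] j) (fun i j => ![d, b] i j)
    !![δ, β; γ, α]

/-!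
For invertible `Ω` all determinants are Schur complements:
`det [Ω a; b α] = det Ω · (α - b Ω⁻¹ a)`, and the doubly bordered determinant is `det Ω` times the
determinant of the `2 × 2` complement, so the identity becomes a ring identity in the four
scalar complements.

The general case follows by genericity. Over `R[X]` the matrix `X • 1 + Ω` has monic, hence
regular, determinant; so it becomes invertible in the total ring of fractions of `R[X]`, into
which `R[X]` embeds. The identity therefore holds over `R[X]`, and evaluating at `X = 0` gives
it for `Ω`.
-/

open Polynomial

namespace Matrix

variable {R S n : Type*} [CommRing R] [CommRing S]

-- `border` and `border2` unfold to these at `R = ℂ`, `n = Fin N`.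
def bordered (Ω : Matrix n n R) (a b : n → R) (α : R) : Matrix (n ⊕ Unit) (n ⊕ Unit) R :=
  fromBlocks Ω (replicateCol Unit a) (replicateRow Unit b) (of fun _ _ => α)

def bordered₂ (Ω : Matrix n n R) (c a d b : n → R) (δ β γ α : R) :
    Matrix (n ⊕ Fin 2) (n ⊕ Fin 2) R :=
  fromBlocks Ω (of fun i j => ![c i, a i] j) (of ![d, b]) !![δ, β; γ, α]

theorem bordered_map (f : R →+* S) (Ω : Matrix n n R) (a b : n → R) (α : R) :
    (bordered Ω a b α).map f = bordered (Ω.map f) (f ∘ a) (f ∘ b) (f α) := by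
  rw [bordered, fromBlocks_map]
  rfl

theorem bordered₂_map (f : R →+* S) (Ω : Matrix n n R) (c a d b : n → R) (δ β γ α : R) :
    (bordered₂ Ω c a d b δ β γ α).map f =
      bordered₂ (Ω.map f) (f ∘ c) (f ∘ a) (f ∘ d) (f ∘ b) (f δ) (f β) (f γ) (f α) := by
  rw [bordered₂, fromBlocks_map]
  congr 1
  · ext i j; fin_cases j <;> rfl
  · ext i j; fin_cases i <;> rfl
  · ext i j; fin_cases i <;> fin_cases j <;> rfl

variable [Fintype n] [DecidableEq n]

theorem det_bordered (Ω : Matrix n n R) [Invertible Ω] (a b : n → R) (α : R) :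
    (bordered Ω a b α).det = Ω.det * (α - b ⬝ᵥ Ω⁻¹ *ᵥ a) := by
  rw [bordered, det_fromBlocks₁₁, Matrix.mul_assoc, ← replicateCol_mulVec,
    replicateRow_mul_replicateCol, det_unique (n := Unit)]
  simp

theorem det_bordered₂ (Ω : Matrix n n R) [Invertible Ω] (c a d b : n → R) (δ β γ α : R) :
    (bordered₂ Ω c a d b δ β γ α).det = Ω.det *
      ((δ - d ⬝ᵥ Ω⁻¹ *ᵥ c) * (α - b ⬝ᵥ Ω⁻¹ *ᵥ a)
        - (β - d ⬝ᵥ Ω⁻¹ *ᵥ a) * (γ - b ⬝ᵥ Ω⁻¹ *ᵥ c)) := by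
  rw [bordered₂, det_fromBlocks₁₁, det_fin_two]
  simp [-vecMul_vecMul, dotProduct_mulVec, vecMul]

def BorderedJacobiIdentity (Ω : Matrix n n R) (a c d b : n → R) (α β γ δ : R) : Prop :=
  (bordered Ω c b γ).det * (bordered Ω a d β).det
    - (bordered Ω a b α).det * (bordered Ω c d δ).det
    = -Ω.det * (bordered₂ Ω c a d b δ β γ α).det

theorem borderedJacobiIdentity_of_isUnit_det {Ω : Matrix n n R} (hΩ : IsUnit Ω.det)
    (a c d b : n → R) (α β γ δ : R) : BorderedJacobiIdentity Ω a c d b α β γ δ := by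
  have := Ω.invertibleOfIsUnitDet hΩ
  rw [BorderedJacobiIdentity, det_bordered, det_bordered, det_bordered, det_bordered,
    det_bordered₂]
  ring

namespace BorderedJacobiIdentity

variable {Ω : Matrix n n R} {a c d b : n → R} {α β γ δ : R}

theorem map (h : BorderedJacobiIdentity Ω a c d b α β γ δ) (f : R →+* S) :
    BorderedJacobiIdentity (Ω.map f) (f ∘ a) (f ∘ c) (f ∘ d) (f ∘ b)
      (f α) (f β) (f γ) (f δ) := by
  simpa only [BorderedJacobiIdentity, map_sub, map_mul, map_neg, RingHom.map_det,
    RingHom.mapMatrix_apply, bordered_map, bordered₂_map] using congrArg f h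

theorem of_map {f : R →+* S} (hf : Function.Injective f)
    (h : BorderedJacobiIdentity (Ω.map f) (f ∘ a) (f ∘ c) (f ∘ d) (f ∘ b)
      (f α) (f β) (f γ) (f δ)) :
    BorderedJacobiIdentity Ω a c d b α β γ δ := by
  apply hf
  simpa only [BorderedJacobiIdentity, map_sub, map_mul, map_neg, RingHom.map_det,
    RingHom.mapMatrix_apply, bordered_map, bordered₂_map] using h

end BorderedJacobiIdentity

theorem borderedJacobiIdentity (Ω : Matrix n n R) (a c d b : n → R) (α β γ δ : R) :
    BorderedJacobiIdentity Ω a c d b α β γ δ := by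
  let ΩX : Matrix n n R[X] := (X : R[X]) • 1 + Ω.map C
  let K := FractionRing R[X]
  have hunit : IsUnit (ΩX.map (algebraMap R[X] K)).det := by
    have hmonic : ΩX.det.Monic := leadingCoeff_det_X_one_add_C Ω
    rw [← RingHom.mapMatrix_apply, ← RingHom.map_det]
    exact IsLocalization.map_units K
      (⟨_, hmonic.mem_nonZeroDivisors⟩ : nonZeroDivisors R[X])
  have hX : BorderedJacobiIdentity ΩX (C ∘ a) (C ∘ c) (C ∘ d) (C ∘ b) (C α) (C β) (C γ) (C δ) :=
    .of_map (IsFractionRing.injective R[X] K) (borderedJacobiIdentity_of_isUnit_det hunit ..)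
  have hΩ : ΩX.map (eval 0) = Ω := by
    ext i j
    by_cases hij : i = j <;> simp [ΩX, hij]
  simpa [hΩ, Function.comp_def] using hX.map (evalRingHom 0)

end Matrix

/-- The Jacobi/Desnanot-type determinant identity for bordered determinants. -/
theorem stmt13 (N : ℕ) (Ω : Matrix (Fin N) (Fin N) ℂ)
    (a c d b : Fin N → ℂ) (α β γ δ : ℂ) :
    (border Ω c b γ).det * (border Ω a d β).det
      - (border Ω a b α).det * (border Ω c d δ).det
      = -Ω.det * (border2 Ω c a d b δ β γ α).det :=
  borderedJacobiIdentity Ω a c d b α β γ δ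
end

section
/- Suppose the scalar functions φ, φ̄, φ̄̄ on ℤ² satisfy, with nowhere-zero potentials v, w: φ₁ = a₁(w₁/w)φ + λφ̄, φ̄₁ = a₁(v₁/v)(w/w₁)φ̄ + λφ̄̄, φ̄̄₁ = a₁(v/v₁)φ̄̄ + λφ. Then φ satisfies the third-order scalar equation φ₁₁₁ − a₁·(v w₁₁ + v₁₁ w₁ + v₁ w₁₁₁)/(v₁ w₁₁)·φ₁₁ + a₁²·(v w₁₁ + v₁₁ w₁ + v₁ w)/(v₁ w₁)·φ₁ − a₁³φ = λ³φ. -/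
/-!
The first equation gives `l φ̄ = φ₁ - a₁ (w₁/w) φ`; shifting it and substituting into the second
gives `l² φ̄̄` in terms of `φ, φ₁, φ₂`, and the third equation then expresses `l³ φ` through
`φ, …, φ₃`. After clearing the denominators `v₁ w₁ w₂`, the scalar equation is an explicit linear
combination of the three recursions at consecutive sites.
-/

section

variable {K : Type*} [Field K] {φ ψ χ v w : ℤ → K} {a l : K}

theorem third_order_of_cleared_recursion
    (h1 : ∀ k, φ (k+1) * w k = a * w (k+1) * φ k + l * ψ k * w k)
    (h2 : ∀ k, ψ (k+1) * (v k * w (k+1))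
      = a * v (k+1) * w k * ψ k + l * χ k * (v k * w (k+1)))
    (h3 : ∀ k, χ (k+1) * v (k+1) = a * v k * χ k + l * φ k * v (k+1)) (m : ℤ) :
    φ (m+3) * (v (m+1) * w (m+1) * w (m+2))
      - a * ((v m * w (m+2) + v (m+2) * w (m+1) + v (m+1) * w (m+3)) * w (m+1)) * φ (m+2)
      + a^2 * ((v m * w (m+2) + v (m+2) * w (m+1) + v (m+1) * w m) * w (m+2)) * φ (m+1)
      - a^3 * φ m * (v (m+1) * w (m+1) * w (m+2))
      = l^3 * φ m * (v (m+1) * w (m+1) * w (m+2)) := by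
  have h1₁ := h1 (m+1)
  have h1₂ := h1 (m+2)
  have h2₁ := h2 (m+1)
  rw [show m + 1 + 1 = m + 2 by ring] at h1₁ h2₁
  rw [show m + 2 + 1 = m + 3 by ring] at h1₂
  linear_combination (l^2 * w (m+1) * w (m+2)) * h3 m + (l * w (m+1)) * h2₁
    - (a * l * w (m+2)) * h2 m + (v (m+1) * w (m+1)) * h1₂
    - (a * v (m+2) * w (m+1) + a * v m * w (m+2)) * h1₁
    + (a^2 * v (m+1) * w (m+2)) * h1 m

theorem third_order_of_recursion (hv : ∀ k, v k ≠ 0) (hw : ∀ k, w k ≠ 0)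
    (h1 : ∀ k, φ (k+1) = a * (w (k+1) / w k) * φ k + l * ψ k)
    (h2 : ∀ k, ψ (k+1) = a * (v (k+1) / v k) * (w k / w (k+1)) * ψ k + l * χ k)
    (h3 : ∀ k, χ (k+1) = a * (v k / v (k+1)) * χ k + l * φ k) (m : ℤ) :
    φ (m+3)
      - a * ((v m * w (m+2) + v (m+2) * w (m+1) + v (m+1) * w (m+3))
          / (v (m+1) * w (m+2))) * φ (m+2)
      + a^2 * ((v m * w (m+2) + v (m+2) * w (m+1) + v (m+1) * w m)
          / (v (m+1) * w (m+1))) * φ (m+1)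
      - a^3 * φ m
      = l^3 * φ m := by
  have cleared := third_order_of_cleared_recursion (φ := φ) (ψ := ψ) (χ := χ) (v := v) (w := w)
    (a := a) (l := l)
    (fun k => by rw [h1 k]; field_simp [hw k])
    (fun k => by rw [h2 k]; field_simp [hv k, hw (k+1)])
    (fun k => by rw [h3 k]; field_simp [hv (k+1)]) m
  field_simp [hv (m+1), hw (m+1), hw (m+2)]
  linear_combination cleared

end

/-- The first-order 3×3 linear system implies the third-order scalar equation
    for φ in the n₁ direction. -/
theorem stmt17 (φ φb φbb v w : ℤ → ℤ → ℂ) (a₁ l : ℂ)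
    (hv : ∀ m n, v m n ≠ 0) (hw : ∀ m n, w m n ≠ 0)
    (h1 : ∀ m n, φ (m+1) n = a₁ * (w (m+1) n / w m n) * φ m n + l * φb m n)
    (h2 : ∀ m n, φb (m+1) n
      = a₁ * (v (m+1) n / v m n) * (w m n / w (m+1) n) * φb m n + l * φbb m n)
    (h3 : ∀ m n, φbb (m+1) n = a₁ * (v m n / v (m+1) n) * φbb m n + l * φ m n) :
    ∀ m n, φ (m+3) n
      - a₁ * ((v m n * w (m+2) n + v (m+2) n * w (m+1) n + v (m+1) n * w (m+3) n)
          / (v (m+1) n * w (m+2) n)) * φ (m+2) n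
      + a₁^2 * ((v m n * w (m+2) n + v (m+2) n * w (m+1) n + v (m+1) n * w m n)
          / (v (m+1) n * w (m+1) n)) * φ (m+1) n
      - a₁^3 * φ m n
      = l^3 * φ m n := fun m n =>
  third_order_of_recursion (φ := (φ · n)) (ψ := (φb · n)) (χ := (φbb · n))
    (hv · n) (hw · n) (h1 · n) (h2 · n) (h3 · n) m
end
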